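/- Let m ≥ 1 and let P ∈ ℝ_{≥0}^{n²×n²} be a nonnegative matrix with PSD-rank prank(P) ≤ 2m. View P as an n×n array of n×n blocks P^{(i,j)}, and assume every diagonal block P^{(i,i)} is the zero matrix. Define A = {i ∈ [n] : ∃ j, prank(P^{(i,j)}) > m} and B = {j ∈ [n] : ∃ i, prank(P^{(i,j)}) > m}. Then A ∩ B = ∅; equivalently, all blocks of PSD-rank greater than m lie in the combinatorial rectangle A×B, which contains no diagonal position. -/

import Mathlib

open Matrix BigOperators Kronecker
open scoped ComplexOrder

/-- `P` admits a PSD factorization of size `r`: there are `r × r` complex positive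
semidefinite matrices `C i` (one per row index) and `D j` (one per column index) with
`P i j = tr (C i * D j)`. -/
def HasPsdFac {α β : Type} [Fintype α] [Fintype β] (P : Matrix α β ℝ) (r : ℕ) : Prop :=
  ∃ (C : α → Matrix (Fin r) (Fin r) ℂ) (D : β → Matrix (Fin r) (Fin r) ℂ),
    (∀ i, (C i).PosSemidef) ∧ (∀ j, (D j).PosSemidef) ∧
      ∀ i j, (P i j : ℂ) = ((C i) * (D j)).trace

/-- The PSD-rank of a nonnegative matrix: the least size of a PSD factorization. -/
noncomputable def prank {α β : Type} [Fintype α] [Fintype β] (P : Matrix α β ℝ) : ℕ :=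
  sInf {r | HasPsdFac P r}

/-- `P` admits a `k`-block PSD factorization of size `r`: there are `k × k` complex
positive semidefinite matrices `C i l`, `D j l` (`l ∈ [r]`) with
`P i j = ∑ l, tr (C i l * D j l)`. -/
def HasBlockPsdFac {α β : Type} [Fintype α] [Fintype β] (k : ℕ)
    (P : Matrix α β ℝ) (r : ℕ) : Prop :=
  ∃ (C : α → Fin r → Matrix (Fin k) (Fin k) ℂ)
    (D : β → Fin r → Matrix (Fin k) (Fin k) ℂ),
    (∀ i l, (C i l).PosSemidef) ∧ (∀ j l, (D j l).PosSemidef) ∧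
      ∀ i j, (P i j : ℂ) = ∑ l, ((C i l) * (D j l)).trace

/-- The `k`-block PSD rank of a nonnegative matrix:
the least size of a `k`-block PSD factorization. -/
noncomputable def kprank {α β : Type} [Fintype α] [Fintype β] (k : ℕ)
    (P : Matrix α β ℝ) : ℕ :=
  sInf {r | HasBlockPsdFac k P r}

/-- The nonnegative rank of a nonnegative matrix: the least `r` such that `P` is a sum
of `r` nonnegative rank-one matrices (outer products of nonnegative vectors). -/
noncomputable def nnRank {α β : Type} [Fintype α] [Fintype β] (P : Matrix α β ℝ) : ℕ :=
  sInf {r | ∃ (u : Fin r → α → ℝ) (v : Fin r → β → ℝ),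
    (∀ l i, 0 ≤ u l i) ∧ (∀ l j, 0 ≤ v l j) ∧ ∀ i j, P i j = ∑ l, u l i * v l j}

/-! Fix a PSD factorization `P x y = tr (C x * D y)` of size `r = prank P ≤ 2m` and a block
index `i`, and put `G = ∑ₓ C (i, x)`, `H = ∑ᵧ D (i, y)`. The zero diagonal block gives
`tr (G * H) = 0`, which for positive semidefinite `G`, `H` forces `G * H = 0`, hence
`rank G + rank H ≤ r`. Every `C (i, x)` is dominated by `G`, so its range lies in `range G`;
compressing the factorization to `range G` bounds the PSD-rank of every block in block-row `i`
by `rank G`, and likewise every block in block-column `i` by `rank H`. These two ranks cannot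
both exceed `m`. -/

namespace Matrix

variable {𝕜 n : Type*} [RCLike 𝕜] [Fintype n]

theorem PosSemidef.mulVec_eq_zero_of_sum_mulVec_eq_zero {ι : Type*} [Fintype ι]
    {C : ι → Matrix n n 𝕜} (hC : ∀ k, (C k).PosSemidef) {v : n → 𝕜}
    (hv : (∑ k, C k) *ᵥ v = 0) (k : ι) : C k *ᵥ v = 0 := by
  have hsum : ∑ k, star v ⬝ᵥ C k *ᵥ v = 0 := by
    rw [← dotProduct_sum, ← sum_mulVec, hv, dotProduct_zero]
  rw [Finset.sum_eq_zero_iff_of_nonneg fun k _ => (hC k).dotProduct_mulVec_nonneg v] at hsum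
  exact ((hC k).dotProduct_mulVec_zero_iff v).mp (hsum k (Finset.mem_univ k))

theorem exists_mulVec_conjTranspose_mulVec_eq (S : Submodule 𝕜 (EuclideanSpace 𝕜 n)) :
    ∃ U : Matrix n (Fin (Module.finrank 𝕜 S)) 𝕜, ∀ v ∈ S, U *ᵥ (Uᴴ *ᵥ v.ofLp) = v.ofLp := by
  let b := stdOrthonormalBasis 𝕜 S
  refine ⟨of fun a k => (b k : EuclideanSpace 𝕜 n) a, fun v hv => ?_⟩
  have hv' := congrArg (fun x : S => (x : EuclideanSpace 𝕜 n).ofLp) (b.sum_repr' ⟨v, hv⟩)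
  simp only [Submodule.coe_inner, AddSubmonoidClass.coe_finsetSum, SetLike.val_smul,
    WithLp.ofLp_sum, WithLp.ofLp_smul] at hv'
  conv_rhs => rw [← hv']
  ext a
  simp [mulVec, dotProduct, Finset.sum_apply, EuclideanSpace.inner_eq_star_dotProduct, mul_comm]

variable [DecidableEq n]

open scoped MatrixOrder in
theorem PosSemidef.mul_eq_zero_of_trace_mul_eq_zero {G H : Matrix n n 𝕜}
    (hG : G.PosSemidef) (hH : H.PosSemidef) (h : (G * H).trace = 0) : G * H = 0 := by
  obtain ⟨E, rfl⟩ := CStarAlgebra.nonneg_iff_eq_star_mul_self.mp hG.nonneg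
  obtain ⟨F, rfl⟩ := CStarAlgebra.nonneg_iff_eq_star_mul_self.mp hH.nonneg
  simp only [star_eq_conjTranspose] at h ⊢
  have hEF : E * Fᴴ = 0 := by
    rw [← trace_conjTranspose_mul_self_eq_zero_iff, conjTranspose_mul, conjTranspose_conjTranspose,
      Matrix.mul_assoc, trace_mul_comm, ← h]
    simp only [Matrix.mul_assoc]
  rw [Matrix.mul_assoc, ← Matrix.mul_assoc E, hEF, Matrix.zero_mul, Matrix.mul_zero]

theorem finrank_range_toEuclideanLin {m : Type*} [Fintype m] (A : Matrix m n 𝕜) :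
    Module.finrank 𝕜 (LinearMap.range (toEuclideanLin A)) = A.rank := by
  rw [toEuclideanLin_eq_toLin_orthonormal,
    A.rank_eq_finrank_range_toLin (EuclideanSpace.basisFun m 𝕜).toBasis
      (EuclideanSpace.basisFun n 𝕜).toBasis]

end Matrix

theorem LinearMap.IsSymmetric.range_le_range_of_ker_le {𝕜 E : Type*} [RCLike 𝕜]
    [NormedAddCommGroup E] [InnerProductSpace 𝕜 E] [FiniteDimensional 𝕜 E] {S T : E →ₗ[𝕜] E}
    (hS : S.IsSymmetric) (hT : T.IsSymmetric) (h : LinearMap.ker T ≤ LinearMap.ker S) :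
    LinearMap.range S ≤ LinearMap.range T := by
  rw [← (LinearMap.range S).orthogonal_orthogonal, ← (LinearMap.range T).orthogonal_orthogonal,
    hS.orthogonal_range, hT.orthogonal_range]
  exact Submodule.orthogonal_le h

theorem Matrix.range_toEuclideanLin_le_range_sum {𝕜 n ι : Type*} [RCLike 𝕜] [Fintype n]
    [DecidableEq n] [Fintype ι] {C : ι → Matrix n n 𝕜} (hC : ∀ k, (C k).PosSemidef) (k : ι) :
    LinearMap.range (toEuclideanLin (C k)) ≤ LinearMap.range (toEuclideanLin (∑ k, C k)) := by
  refine LinearMap.IsSymmetric.range_le_range_of_ker_le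
    (isSymmetric_toEuclideanLin_iff.mpr (hC k).1)
    (isSymmetric_toEuclideanLin_iff.mpr (posSemidef_sum _ fun k _ => hC k).1) fun v hv => ?_
  simp only [LinearMap.mem_ker, toLpLin_apply, WithLp.toLp_eq_zero] at hv ⊢
  exact PosSemidef.mulVec_eq_zero_of_sum_mulVec_eq_zero hC hv k

section PsdRank

variable {α β : Type} [Fintype α] [Fintype β]

theorem HasPsdFac.transpose {P : Matrix α β ℝ} {r : ℕ} (h : HasPsdFac P r) :
    HasPsdFac Pᵀ r := by
  obtain ⟨C, D, hC, hD, hP⟩ := h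
  exact ⟨D, C, hD, hC, fun j i => by rw [transpose_apply, hP, trace_mul_comm]⟩

theorem HasPsdFac.submatrix {κ μ : Type} [Fintype κ] [Fintype μ] {P : Matrix α β ℝ} {r : ℕ}
    (h : HasPsdFac P r) (f : κ → α) (g : μ → β) : HasPsdFac (P.submatrix f g) r := by
  obtain ⟨C, D, hC, hD, hP⟩ := h
  exact ⟨C ∘ f, D ∘ g, fun i => hC (f i), fun j => hD (g j), fun i j => hP (f i) (g j)⟩

theorem hasPsdFac_card_of_nonneg {P : Matrix α β ℝ} (hP : ∀ i j, 0 ≤ P i j) :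
    HasPsdFac P (Fintype.card α) := by
  classical
  let e := Fintype.equivFin α
  refine ⟨fun i => diagonal (Pi.single (e i) 1), fun j => diagonal fun k => (P (e.symm k) j : ℂ),
    fun i => posSemidef_diagonal_iff.mpr fun k => ?_,
    fun j => posSemidef_diagonal_iff.mpr fun k => Complex.zero_le_real.mpr (hP _ _), fun i j => ?_⟩
  · exact (Pi.single_nonneg.mpr zero_le_one : (0 : Fin _ → ℂ) ≤ Pi.single (e i) 1) k
  · simp [diagonal_mul_diagonal, trace_diagonal, Pi.single_apply]

theorem prank_le {P : Matrix α β ℝ} {r : ℕ} (h : HasPsdFac P r) : prank P ≤ r :=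
  Nat.sInf_le h

theorem hasPsdFac_prank {P : Matrix α β ℝ} (hP : ∀ i j, 0 ≤ P i j) : HasPsdFac P (prank P) :=
  Nat.sInf_mem (s := {r | HasPsdFac P r}) ⟨_, hasPsdFac_card_of_nonneg hP⟩

theorem HasPsdFac.of_range_le {X : Matrix α β ℝ} {r : ℕ}
    {C : α → Matrix (Fin r) (Fin r) ℂ} {D : β → Matrix (Fin r) (Fin r) ℂ}
    (hC : ∀ i, (C i).PosSemidef) (hD : ∀ j, (D j).PosSemidef)
    (hX : ∀ i j, (X i j : ℂ) = (C i * D j).trace) (S : Submodule ℂ (EuclideanSpace ℂ (Fin r)))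
    (hS : ∀ i, LinearMap.range (toEuclideanLin (C i)) ≤ S) :
    HasPsdFac X (Module.finrank ℂ S) := by
  obtain ⟨U, hU⟩ := exists_mulVec_conjTranspose_mulVec_eq S
  have hUC : ∀ i, U * Uᴴ * C i = C i := fun i => ext_iff_mulVec.mpr fun v => by
    rw [← mulVec_mulVec, ← mulVec_mulVec]
    exact hU (WithLp.toLp 2 (C i *ᵥ v)) (hS i ⟨WithLp.toLp 2 v, rfl⟩)
  have hCU : ∀ i, C i * (U * Uᴴ) = C i := fun i => by
    simpa only [conjTranspose_mul, conjTranspose_conjTranspose, (hC i).1.eq, Matrix.mul_assoc]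
      using congrArg conjTranspose (hUC i)
  refine ⟨fun i => Uᴴ * C i * U, fun j => Uᴴ * D j * U,
    fun i => (hC i).conjTranspose_mul_mul_same U, fun j => (hD j).conjTranspose_mul_mul_same U,
    fun i j => ?_⟩
  calc (X i j : ℂ) = (U * (Uᴴ * C i * D j)).trace := by
        rw [hX, ← Matrix.mul_assoc, ← Matrix.mul_assoc, hUC]
    _ = (Uᴴ * C i * D j * U).trace := trace_mul_comm _ _
    _ = (Uᴴ * (C i * (U * Uᴴ)) * D j * U).trace := by rw [hCU]
    _ = (Uᴴ * C i * U * (Uᴴ * D j * U)).trace := by simp only [Matrix.mul_assoc]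

theorem HasPsdFac.exists_add_le_of_zero_block {κ μ : Type} [Fintype κ] [Fintype μ]
    {P : Matrix α β ℝ} {r : ℕ} (hP : HasPsdFac P r) {f : κ → α} {g : μ → β}
    (hPfg : ∀ x y, P (f x) (g y) = 0) :
    ∃ s t, s + t ≤ r ∧ HasPsdFac (P.submatrix f id) s ∧ HasPsdFac (P.submatrix id g) t := by
  obtain ⟨C, D, hC, hD, hCD⟩ := hP
  set G := ∑ x, C (f x)
  set H := ∑ y, D (g y)
  have hG : G.PosSemidef := posSemidef_sum _ fun x _ => hC (f x)
  have hH : H.PosSemidef := posSemidef_sum _ fun y _ => hD (g y)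
  have hGH : G * H = 0 := by
    refine hG.mul_eq_zero_of_trace_mul_eq_zero hH ?_
    simp only [G, H, Finset.sum_mul, Finset.mul_sum, trace_sum, ← hCD, hPfg, Complex.ofReal_zero,
      Finset.sum_const_zero]
  refine ⟨Module.finrank ℂ (LinearMap.range (toEuclideanLin G)),
    Module.finrank ℂ (LinearMap.range (toEuclideanLin H)), ?_,
    HasPsdFac.of_range_le (fun x => hC (f x)) hD (fun x y => hCD (f x) y) _
      (range_toEuclideanLin_le_range_sum fun x => hC (f x)), ?_⟩
  · simpa [finrank_range_toEuclideanLin] using rank_add_rank_le_card_of_mul_eq_zero hGH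
  · simpa using (HasPsdFac.of_range_le (X := (P.submatrix id g)ᵀ) (fun y => hD (g y)) hC
      (fun y x => (hCD x (g y)).trans (trace_mul_comm _ _)) _
      (range_toEuclideanLin_le_range_sum fun y => hD (g y))).transpose

end PsdRank

theorem stmt14_general {n m : ℕ}
    (P : Matrix (Fin n × Fin n) (Fin n × Fin n) ℝ) (hPnn : ∀ x y, 0 ≤ P x y)
    (hPrank : prank P ≤ 2 * m)
    (hdiagzero : ∀ i x y, P (i, x) (i, y) = 0)
    (A B : Set (Fin n))
    (hA : A = {i | ∃ j, m <
      prank (Matrix.of fun x y => P (i, x) (j, y) : Matrix (Fin n) (Fin n) ℝ)})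
    (hB : B = {j | ∃ i, m <
      prank (Matrix.of fun x y => P (i, x) (j, y) : Matrix (Fin n) (Fin n) ℝ)}) :
    A ∩ B = ∅ := by
  subst hA hB
  refine Set.eq_empty_iff_forall_notMem.mpr fun i ⟨⟨j, hij⟩, ⟨k, hki⟩⟩ => ?_
  obtain ⟨s, t, hst, hs, ht⟩ := (hasPsdFac_prank hPnn).exists_add_le_of_zero_block
    (f := fun x => (i, x)) (g := fun y => (i, y)) (hdiagzero i)
  have hms : m < s := hij.trans_le (prank_le (hs.submatrix id fun y => (j, y)))
  have hmt : m < t := hki.trans_le (prank_le (ht.submatrix (fun x => (k, x)) id))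
  omega

theorem stmt14 {n m : ℕ} (hm : 1 ≤ m)
    (P : Matrix (Fin n × Fin n) (Fin n × Fin n) ℝ) (hPnn : ∀ x y, 0 ≤ P x y)
    (hPrank : prank P ≤ 2 * m)
    (hdiagzero : ∀ i x y, P (i, x) (i, y) = 0)
    (A B : Set (Fin n))
    (hA : A = {i | ∃ j, m <
      prank (Matrix.of fun x y => P (i, x) (j, y) : Matrix (Fin n) (Fin n) ℝ)})
    (hB : B = {j | ∃ i, m <
      prank (Matrix.of fun x y => P (i, x) (j, y) : Matrix (Fin n) (Fin n) ℝ)}) :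
    A ∩ B = ∅ :=
  stmt14_general P hPnn hPrank hdiagzero A B hA hB
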